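/- Let u solve u_t + a(x,t) u_x + b(x,t) u = f(x,t) on Ω = (0,L]×(0,T] with a ≥ α > 0, b ≥ 0, u(0,t) = ψ(t), u(x,0) = φ(x). Suppose |f(x,t)| ≤ (C₁/ε) e^{(x−L)/ε} for all (x,t) and some constants C₁ > 0, 0 < ε ≤ 1. Then |u(x,t)| ≤ ‖φ‖_∞ + ‖ψ‖_∞ + (C₁/α) e^{(x−L)/ε} for all (x,t) in the closure of Ω. -/

import Mathlib

open Set Real

/-- If `g` has a minimum on `Icc 0 L` at `x₀ ∈ Ioc 0 L` and a derivative `d` there,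
then `d ≤ 0`. -/
lemma deriv_nonpos_of_isMinOn {g : ℝ → ℝ} {L x₀ d : ℝ} (hx₀ : x₀ ∈ Ioc 0 L)
    (hmin : IsMinOn g (Icc 0 L) x₀) (hd : HasDerivAt g d x₀) : d ≤ 0 := by
  have hL : (0:ℝ) ≤ L := le_of_lt (lt_of_lt_of_le hx₀.1 hx₀.2)
  have hseg : segment ℝ x₀ (0:ℝ) ⊆ Icc 0 L := by
    apply (convex_Icc (0:ℝ) L).segment_subset
    · exact ⟨le_of_lt hx₀.1, hx₀.2⟩
    · exact ⟨le_refl 0, hL⟩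
  have hcone : (0:ℝ) - x₀ ∈ posTangentConeAt (Icc 0 L) x₀ :=
    sub_mem_posTangentConeAt_of_segment_subset hseg
  have hfd : HasFDerivWithinAt g ((1 : ℝ →L[ℝ] ℝ).smulRight d) (Icc 0 L) x₀ :=
    hd.hasFDerivAt.hasFDerivWithinAt
  have := hmin.localize.hasFDerivWithinAt_nonneg hfd hcone
  simp only [ContinuousLinearMap.smulRight_apply, ContinuousLinearMap.one_apply,
    smul_eq_mul, zero_sub] at this
  nlinarith [hx₀.1]

/-- Minimum principle for the operator `∂t + a ∂x + b·` on `Ω = (0,L]×(0,T]`. -/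
lemma min_principle (L T α : ℝ) (hL : 0 < L) (hT : 0 < T) (hα : 0 < α)
    (a b w wx wt : ℝ → ℝ → ℝ)
    (hw_cont : ContinuousOn (fun p : ℝ × ℝ => w p.1 p.2) (Icc 0 L ×ˢ Icc 0 T))
    (ha : ∀ x ∈ Icc 0 L, ∀ t ∈ Icc 0 T, α ≤ a x t)
    (hb : ∀ x ∈ Icc 0 L, ∀ t ∈ Icc 0 T, 0 ≤ b x t)
    (hwx : ∀ x ∈ Ioc 0 L, ∀ t ∈ Ioc 0 T, HasDerivAt (fun s => w s t) (wx x t) x)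
    (hwt : ∀ x ∈ Ioc 0 L, ∀ t ∈ Ioc 0 T, HasDerivAt (fun s => w x s) (wt x t) t)
    (hLw : ∀ x ∈ Ioc 0 L, ∀ t ∈ Ioc 0 T,
      0 ≤ wt x t + a x t * wx x t + b x t * w x t)
    (hbc : ∀ t ∈ Icc 0 T, 0 ≤ w 0 t)
    (hic : ∀ x ∈ Icc 0 L, 0 ≤ w x 0) :
    ∀ x ∈ Icc 0 L, ∀ t ∈ Icc 0 T, 0 ≤ w x t := by
  by_contra hcon
  push_neg at hcon
  obtain ⟨x₁, hx₁, t₁, ht₁, hneg⟩ := hcon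
  set δ : ℝ := -w x₁ t₁ / (2 * T) with hδdef
  have hδ : 0 < δ := by
    apply div_pos (by linarith) (by linarith)
  set v : ℝ × ℝ → ℝ := fun p => w p.1 p.2 + δ * p.2 with hvdef
  have hK : IsCompact (Icc (0:ℝ) L ×ˢ Icc (0:ℝ) T) :=
    isCompact_Icc.prod isCompact_Icc
  have hKne : (Icc (0:ℝ) L ×ˢ Icc (0:ℝ) T).Nonempty :=
    ⟨(0, 0), ⟨⟨le_refl 0, le_of_lt hL⟩, ⟨le_refl 0, le_of_lt hT⟩⟩⟩
  have hv_cont : ContinuousOn v (Icc 0 L ×ˢ Icc 0 T) :=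
    hw_cont.add ((continuous_const.mul (continuous_snd)).continuousOn)
  obtain ⟨p₀, hp₀K, hmin⟩ := hK.exists_isMinOn hKne hv_cont
  obtain ⟨x₀, t₀⟩ := p₀
  obtain ⟨hx₀, ht₀⟩ := hp₀K
  -- the minimum value is negative
  have hvneg : v (x₀, t₀) < 0 := by
    have h1 : v (x₀, t₀) ≤ v (x₁, t₁) := hmin ⟨hx₁, ht₁⟩
    have h2 : v (x₁, t₁) = w x₁ t₁ + δ * t₁ := rfl
    have h3 : δ * t₁ ≤ δ * T := by
      apply mul_le_mul_of_nonneg_left ht₁.2 (le_of_lt hδ)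
    have h4 : δ * T = -w x₁ t₁ / 2 := by
      field_simp [hδdef]
      rw [hδdef, div_mul_eq_mul_div, div_mul_eq_mul_div, div_eq_iff (ne_of_gt (by positivity : (0:ℝ) < 2 * T))]
      ring
    nlinarith
  -- the min is not on the parabolic boundary
  have hwneg : w x₀ t₀ < 0 := by
    have : δ * t₀ ≥ 0 := mul_nonneg (le_of_lt hδ) ht₀.1
    have : v (x₀, t₀) = w x₀ t₀ + δ * t₀ := rfl
    nlinarith
  have hx₀' : x₀ ∈ Ioc 0 L := by
    refine ⟨lt_of_le_of_ne hx₀.1 ?_, hx₀.2⟩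
    intro h
    have : x₀ = 0 := h.symm
    subst this
    exact absurd (hbc t₀ ht₀) (not_le.mpr hwneg)
  have ht₀' : t₀ ∈ Ioc 0 T := by
    refine ⟨lt_of_le_of_ne ht₀.1 ?_, ht₀.2⟩
    intro h
    have : t₀ = 0 := h.symm
    subst this
    exact absurd (hic x₀ hx₀) (not_le.mpr hwneg)
  -- derivative conditions at the min
  have hwx_le : wx x₀ t₀ ≤ 0 := by
    apply deriv_nonpos_of_isMinOn hx₀' (g := fun s => w s t₀)
    · intro s hs
      have := hmin (a := (s, t₀)) ⟨hs, ht₀⟩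
      simpa [hvdef] using this
    · exact hwx x₀ hx₀' t₀ ht₀'
  have hwt_le : wt x₀ t₀ + δ ≤ 0 := by
    apply deriv_nonpos_of_isMinOn ht₀' (g := fun s => w x₀ s + δ * s)
    · intro s hs
      have := hmin (a := (x₀, s)) ⟨hx₀, hs⟩
      simpa [hvdef] using this
    · simpa using (hwt x₀ hx₀' t₀ ht₀').fun_add ((hasDerivAt_id t₀).const_mul δ)
  -- contradiction with the differential inequality
  have h0 := hLw x₀ hx₀' t₀ ht₀'
  have haα := ha x₀ hx₀ t₀ ht₀
  have hb0 := hb x₀ hx₀ t₀ ht₀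
  have h1 : a x₀ t₀ * wx x₀ t₀ ≤ 0 :=
    mul_nonpos_of_nonneg_of_nonpos (by linarith) hwx_le
  have h2 : b x₀ t₀ * w x₀ t₀ ≤ 0 :=
    mul_nonpos_of_nonneg_of_nonpos hb0 (le_of_lt hwneg)
  linarith

/-- Stability bound: if `u_t + a u_x + b u = f` on `Ω = (0,L]×(0,T]` with
`a ≥ α > 0`, `b ≥ 0`, `u(0,t)=ψ(t)`, `u(x,0)=φ(x)` and
`|f(x,t)| ≤ (C₁/ε) e^{(x-L)/ε}`, then
`|u(x,t)| ≤ ‖φ‖ + ‖ψ‖ + (C₁/α) e^{(x-L)/ε}` on the closure of `Ω`. -/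
theorem stmt_3
    (L T α ε C₁ Mφ Mψ : ℝ) (hL : 0 < L) (hT : 0 < T)
    (hα : 0 < α) (hε0 : 0 < ε) (hε1 : ε ≤ 1) (hC₁ : 0 < C₁)
    (a b f u ux ut : ℝ → ℝ → ℝ) (ψ φ : ℝ → ℝ)
    (hu_cont : ContinuousOn (fun p : ℝ × ℝ => u p.1 p.2) (Icc 0 L ×ˢ Icc 0 T))
    (ha : ∀ x ∈ Icc 0 L, ∀ t ∈ Icc 0 T, α ≤ a x t)
    (hb : ∀ x ∈ Icc 0 L, ∀ t ∈ Icc 0 T, 0 ≤ b x t)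
    (hux : ∀ x ∈ Ioc 0 L, ∀ t ∈ Ioc 0 T, HasDerivAt (fun s => u s t) (ux x t) x)
    (hut : ∀ x ∈ Ioc 0 L, ∀ t ∈ Ioc 0 T, HasDerivAt (fun s => u x s) (ut x t) t)
    (hpde : ∀ x ∈ Ioc 0 L, ∀ t ∈ Ioc 0 T,
      ut x t + a x t * ux x t + b x t * u x t = f x t)
    (hbc : ∀ t ∈ Icc 0 T, u 0 t = ψ t)
    (hic : ∀ x ∈ Icc 0 L, u x 0 = φ x)
    (hf : ∀ x ∈ Icc 0 L, ∀ t ∈ Icc 0 T,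
      |f x t| ≤ (C₁ / ε) * Real.exp ((x - L) / ε))
    (hMφ : ∀ x ∈ Icc 0 L, |φ x| ≤ Mφ)
    (hMψ : ∀ t ∈ Icc 0 T, |ψ t| ≤ Mψ) :
    ∀ x ∈ Icc 0 L, ∀ t ∈ Icc 0 T,
      |u x t| ≤ Mφ + Mψ + (C₁ / α) * Real.exp ((x - L) / ε) := by
  -- barrier function and its derivative
  set B : ℝ → ℝ := fun x => Mφ + Mψ + (C₁ / α) * Real.exp ((x - L) / ε) with hBdef
  set Bx : ℝ → ℝ := fun x => (C₁ / α) * (Real.exp ((x - L) / ε) * (1 / ε)) with hBxdef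
  have hBderiv : ∀ x : ℝ, HasDerivAt B (Bx x) x := by
    intro x
    have h1 : HasDerivAt (fun x : ℝ => (x - L) / ε) (1 / ε) x := by
      simpa using ((hasDerivAt_id x).sub_const L).div_const ε
    have h2 : HasDerivAt (fun x : ℝ => Real.exp ((x - L) / ε))
        (Real.exp ((x - L) / ε) * (1 / ε)) x := h1.exp
    simpa [hBdef, hBxdef] using (h2.const_mul (C₁ / α)).const_add (Mφ + Mψ)
  have hMφ0 : 0 ≤ Mφ := le_trans (abs_nonneg _) (hMφ 0 ⟨le_refl 0, le_of_lt hL⟩)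
  have hMψ0 : 0 ≤ Mψ := le_trans (abs_nonneg _) (hMψ 0 ⟨le_refl 0, le_of_lt hT⟩)
  have hBpos : ∀ x : ℝ, 0 ≤ B x := by
    intro x
    have := Real.exp_pos ((x - L) / ε)
    have : 0 < (C₁ / α) * Real.exp ((x - L) / ε) :=
      mul_pos (div_pos hC₁ hα) this
    simp only [hBdef]
    linarith
  have hB_cont : Continuous B := by
    fun_prop
  -- key inequality : a * Bx + b * B ≥ |f|
  have hkey : ∀ x ∈ Icc 0 L, ∀ t ∈ Icc 0 T,
      |f x t| ≤ a x t * Bx x + b x t * B x := by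
    intro x hx t ht
    have h1 : (C₁ / ε) * Real.exp ((x - L) / ε) ≤ a x t * Bx x := by
      have haα := ha x hx t ht
      have hBx0 : 0 ≤ Bx x := by
        apply mul_nonneg (le_of_lt (div_pos hC₁ hα))
        positivity
      have : α * Bx x ≤ a x t * Bx x := mul_le_mul_of_nonneg_right haα hBx0
      have heq : α * Bx x = (C₁ / ε) * Real.exp ((x - L) / ε) := by
        simp only [hBxdef]
        field_simp
      linarith
    have h2 : 0 ≤ b x t * B x := mul_nonneg (hb x hx t ht) (hBpos x)
    have := hf x hx t ht
    linarith
  -- apply the minimum principle twice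
  have hplus : ∀ x ∈ Icc 0 L, ∀ t ∈ Icc 0 T, 0 ≤ B x - u x t := by
    apply min_principle L T α hL hT hα a b _ (fun x t => Bx x - ux x t)
      (fun x t => -ut x t)
    · exact ((hB_cont.comp continuous_fst).continuousOn).sub hu_cont
    · exact ha
    · exact hb
    · intro x hx t ht
      exact (hBderiv x).sub (hux x hx t ht)
    · intro x hx t ht
      exact (hut x hx t ht).const_sub (B x)
    · intro x hx t ht
      have hpde' := hpde x hx t ht
      have hx' : x ∈ Icc 0 L := ⟨le_of_lt hx.1, hx.2⟩
      have ht' : t ∈ Icc 0 T := ⟨le_of_lt ht.1, ht.2⟩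
      have hk := hkey x hx' t ht'
      have habs : f x t ≤ |f x t| := le_abs_self _
      nlinarith [hk, habs, hpde']
    · intro t ht
      have := hMψ t ht
      have hB0 := hBpos 0
      have hbu : u 0 t = ψ t := hbc t ht
      have : |ψ t| ≤ Mψ := this
      have hψ : ψ t ≤ Mψ := le_trans (le_abs_self _) this
      have hexp : 0 < (C₁ / α) * Real.exp ((0 - L) / ε) :=
        mul_pos (div_pos hC₁ hα) (Real.exp_pos _)
      simp only [hBdef, hbu]
      linarith
    · intro x hx
      have := hMφ x hx
      have hφ : φ x ≤ Mφ := le_trans (le_abs_self _) this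
      have hexp : 0 < (C₁ / α) * Real.exp ((x - L) / ε) :=
        mul_pos (div_pos hC₁ hα) (Real.exp_pos _)
      have hiu : u x 0 = φ x := hic x hx
      simp only [hBdef, hiu]
      linarith
  have hminus : ∀ x ∈ Icc 0 L, ∀ t ∈ Icc 0 T, 0 ≤ B x + u x t := by
    apply min_principle L T α hL hT hα a b _ (fun x t => Bx x + ux x t)
      (fun x t => ut x t)
    · exact ((hB_cont.comp continuous_fst).continuousOn).add hu_cont
    · exact ha
    · exact hb
    · intro x hx t ht
      exact (hBderiv x).add (hux x hx t ht)
    · intro x hx t ht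
      simpa using (hut x hx t ht).const_add (B x)
    · intro x hx t ht
      have hpde' := hpde x hx t ht
      have hx' : x ∈ Icc 0 L := ⟨le_of_lt hx.1, hx.2⟩
      have ht' : t ∈ Icc 0 T := ⟨le_of_lt ht.1, ht.2⟩
      have hk := hkey x hx' t ht'
      have habs : -f x t ≤ |f x t| := neg_le_abs _
      nlinarith [hk, habs, hpde']
    · intro t ht
      have := hMψ t ht
      have hψ : -ψ t ≤ Mψ := le_trans (neg_le_abs _) this
      have hexp : 0 < (C₁ / α) * Real.exp ((0 - L) / ε) :=
        mul_pos (div_pos hC₁ hα) (Real.exp_pos _)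
      have hbu : u 0 t = ψ t := hbc t ht
      simp only [hBdef, hbu]
      linarith
    · intro x hx
      have := hMφ x hx
      have hφ : -φ x ≤ Mφ := le_trans (neg_le_abs _) this
      have hexp : 0 < (C₁ / α) * Real.exp ((x - L) / ε) :=
        mul_pos (div_pos hC₁ hα) (Real.exp_pos _)
      have hiu : u x 0 = φ x := hic x hx
      simp only [hBdef, hiu]
      linarith
  intro x hx t ht
  have h1 := hplus x hx t ht
  have h2 := hminus x hx t ht
  rw [abs_le]
  constructor <;> simp only [hBdef] at h1 h2 <;> linarith
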